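/- arXiv:1507.06546 — 2 statements merged into one kernel-verified Lean document; each statement's English description precedes it below -/
import Mathlib

section
/- Per-layer energy equality. Let ρ, g be constants with ρ > 0. Let h_α, h, p_S, z_b, G_{α−1/2}, G_{α+1/2} : ℝ×ℝ² → ℝ and u_{α−1}, u_α, u_{α+1}, K_{α−1/2}, K_{α+1/2} : ℝ×ℝ² → ℝ² be continuously differentiable. Assume that at every point the mass equation ∂_t h_α + div(h_α u_α) = G_{α+1/2} − G_{α−1/2} and the momentum equation in velocity form ρ h_α ∂_t u_α + ρ h_α (u_α·∇)u_α + h_α ∇p_S + ρ g h_α ∇(z_b + h) = K_{α−1/2} − K_{α+1/2} + (ρ/2) G_{α+1/2}(u_{α+1} − u_α) + (ρ/2) G_{α−1/2}(u_α − u_{α−1}) hold. Then, with E_α := h_α(|u_α|²/2 + p_S/ρ + g(z_b + h/2)), at every point: ρ ∂_t E_α + (ρ g/2)(h ∂_t h_α − h_α ∂_t h) + ρ div((E_α + g h_α h/2) u_α) = u_α·(K_{α−1/2} − K_{α+1/2}) + h_α ∂_t(p_S + ρ g z_b) + G_{α+1/2}(ρ u_{α+1}·u_α/2 + p_S + ρ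 g(z_b + h)) − G_{α−1/2}(ρ u_α·u_{α−1}/2 + p_S + ρ g(z_b + h)). -/
/-- Partial derivative in time (first coordinate of `ℝ × ℝ × ℝ`). -/
noncomputable def pt (f : ℝ × ℝ × ℝ → ℝ) (p : ℝ × ℝ × ℝ) : ℝ := fderiv ℝ f p (1, 0, 0)

/-- Partial derivative in the first spatial coordinate. -/
noncomputable def px (f : ℝ × ℝ × ℝ → ℝ) (p : ℝ × ℝ × ℝ) : ℝ := fderiv ℝ f p (0, 1, 0)

/-- Partial derivative in the second spatial coordinate. -/
noncomputable def py (f : ℝ × ℝ × ℝ → ℝ) (p : ℝ × ℝ × ℝ) : ℝ := fderiv ℝ f p (0, 0, 1)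

/-- Spatial divergence of a planar vector field. -/
noncomputable def div2 (v : ℝ × ℝ × ℝ → ℝ × ℝ) (p : ℝ × ℝ × ℝ) : ℝ :=
  px (fun q => (v q).1) p + py (fun q => (v q).2) p

/-- Spatial gradient of a scalar field. -/
noncomputable def grad2 (f : ℝ × ℝ × ℝ → ℝ) (p : ℝ × ℝ × ℝ) : ℝ × ℝ := (px f p, py f p)

/-- Componentwise time derivative of a planar vector field. -/
noncomputable def ptv (v : ℝ × ℝ × ℝ → ℝ × ℝ) (p : ℝ × ℝ × ℝ) : ℝ × ℝ :=
  (pt (fun q => (v q).1) p, pt (fun q => (v q).2) p)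

/-- Convective derivative `(u·∇)v`. -/
noncomputable def conv (u v : ℝ × ℝ × ℝ → ℝ × ℝ) (p : ℝ × ℝ × ℝ) : ℝ × ℝ :=
  ((u p).1 * px (fun q => (v q).1) p + (u p).2 * py (fun q => (v q).1) p,
   (u p).1 * px (fun q => (v q).2) p + (u p).2 * py (fun q => (v q).2) p)

/-- Euclidean dot product on `ℝ²`. -/
def dot2 (a b : ℝ × ℝ) : ℝ := a.1 * b.1 + a.2 * b.2

/-- Euclidean norm on `ℝ²`. -/
noncomputable def eunorm (a : ℝ × ℝ) : ℝ := Real.sqrt (a.1 ^ 2 + a.2 ^ 2)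

/-!
With the Bernoulli head `Φ = |u|²/2 + p_S/ρ + g (z_b + h)` one has `E + g hα h/2 = hα Φ`, so
`∂ₜ(hα Φ) + div(hα Φ u) = Φ (∂ₜ hα + div(hα u)) + hα DΦ`, where `D = ∂ₜ + u·∇` is the material
derivative; the first term is given by the mass equation. The kinetic part
`D(|u|²/2) = u·(∂ₜu + (u·∇)u)` is supplied by the momentum equation dotted with `u`, whose gradient
terms cancel the convective part of `D(p_S/ρ + g (z_b + h))`, while the correction
`ρ g/2 (h ∂ₜhα − hα ∂ₜh)` cancels its `∂ₜ h` part; only `hα ∂ₜ(p_S + ρ g z_b)` remains.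
-/

/-- The material derivative `∂ₜ f + u·∇f`, taken as the derivative of `f` along the space-time
direction `(1, u)`, so that it inherits the Leibniz rule from `fderiv`. -/
noncomputable def matDeriv (u : ℝ × ℝ × ℝ → ℝ × ℝ) (f : ℝ × ℝ × ℝ → ℝ) (p : ℝ × ℝ × ℝ) : ℝ :=
  fderiv ℝ f p (1, u p)

section Calculus

variable {u v : ℝ × ℝ × ℝ → ℝ × ℝ} {f φ ψ : ℝ × ℝ × ℝ → ℝ} {p : ℝ × ℝ × ℝ}

theorem matDeriv_eq_pt_add_dot2_grad2 :
    matDeriv u f p = pt f p + dot2 (u p) (grad2 f p) := by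
  have hdir : ((1 : ℝ), u p) = (1, 0, 0) + (u p).1 • ((0 : ℝ), (1 : ℝ), (0 : ℝ))
      + (u p).2 • ((0 : ℝ), (0 : ℝ), (1 : ℝ)) := by
    ext <;> simp
  rw [matDeriv, hdir, map_add, map_add, map_smul, map_smul]
  simp only [pt, px, py, dot2, grad2, smul_eq_mul, add_assoc]

theorem matDeriv_add (hf : DifferentiableAt ℝ f p) (hφ : DifferentiableAt ℝ φ p) :
    matDeriv u (fun q => f q + φ q) p = matDeriv u f p + matDeriv u φ p := by
  simp only [matDeriv, fderiv_fun_add hf hφ, add_apply]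

theorem matDeriv_const_mul (c : ℝ) (hf : DifferentiableAt ℝ f p) :
    matDeriv u (fun q => c * f q) p = c * matDeriv u f p := by
  simp [matDeriv, fderiv_const_mul hf]

theorem matDeriv_mul (hφ : DifferentiableAt ℝ φ p) (hψ : DifferentiableAt ℝ ψ p) :
    matDeriv u (fun q => φ q * ψ q) p = φ p * matDeriv u ψ p + ψ p * matDeriv u φ p := by
  simp [matDeriv, fderiv_fun_mul hφ hψ]

theorem div2_smul (hφ : DifferentiableAt ℝ φ p) (hu : DifferentiableAt ℝ u p) :
    div2 (fun q => φ q • u q) p = φ p * div2 u p + dot2 (u p) (grad2 φ p) := by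
  have hu₁ : DifferentiableAt ℝ (fun q => (u q).1) p := hu.fst
  have hu₂ : DifferentiableAt ℝ (fun q => (u q).2) p := hu.snd
  simp only [div2, px, py, grad2, dot2, Prod.smul_fst, Prod.smul_snd, smul_eq_mul,
    fderiv_fun_mul hφ hu₁, fderiv_fun_mul hφ hu₂, add_apply, smul_apply]
  ring

theorem pt_add_div2_smul (hφ : DifferentiableAt ℝ φ p) (hu : DifferentiableAt ℝ u p) :
    pt φ p + div2 (fun q => φ q • u q) p = matDeriv u φ p + φ p * div2 u p := by
  rw [div2_smul hφ hu, matDeriv_eq_pt_add_dot2_grad2]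
  ring

theorem pt_add_div2_mul_smul (hφ : DifferentiableAt ℝ φ p) (hψ : DifferentiableAt ℝ ψ p)
    (hu : DifferentiableAt ℝ u p) :
    pt (fun q => φ q * ψ q) p + div2 (fun q => (φ q * ψ q) • u q) p
      = ψ p * (pt φ p + div2 (fun q => φ q • u q) p) + φ p * matDeriv u ψ p := by
  rw [pt_add_div2_smul (φ := fun q => φ q * ψ q) (hφ.mul hψ) hu, pt_add_div2_smul hφ hu,
    matDeriv_mul hφ hψ]
  ring

theorem ptv_add_conv :
    ptv v p + conv u v p = (matDeriv u (fun q => (v q).1) p, matDeriv u (fun q => (v q).2) p) := by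
  simp only [matDeriv_eq_pt_add_dot2_grad2, ptv, conv, grad2, dot2, Prod.mk_add_mk]

theorem eunorm_sq (a : ℝ × ℝ) : eunorm a ^ 2 = dot2 a a := by
  rw [eunorm, Real.sq_sqrt (by positivity), dot2]
  ring

@[fun_prop]
theorem DifferentiableAt.dot2 (hu : DifferentiableAt ℝ u p) (hv : DifferentiableAt ℝ v p) :
    DifferentiableAt ℝ (fun q => dot2 (u q) (v q)) p := by
  unfold _root_.dot2
  fun_prop

theorem matDeriv_half_dot2_self (hv : DifferentiableAt ℝ v p) :
    matDeriv u (fun q => dot2 (v q) (v q) / 2) p = dot2 (v p) (ptv v p + conv u v p) := by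
  simp only [div_eq_inv_mul]
  simp (disch := fun_prop) only [dot2, matDeriv_const_mul, matDeriv_add, matDeriv_mul, ptv_add_conv]
  ring

theorem mul_matDeriv_piezometric {ρ : ℝ} (hρ : ρ ≠ 0) (g : ℝ) {pS zb h : ℝ × ℝ × ℝ → ℝ}
    (hpS : DifferentiableAt ℝ pS p) (hzb : DifferentiableAt ℝ zb p) (hh : DifferentiableAt ℝ h p) :
    ρ * matDeriv u (fun q => pS q / ρ + g * (zb q + h q)) p
      = pt (fun q => pS q + ρ * g * zb q) p + ρ * g * pt h p
        + dot2 (u p) (grad2 pS p + (ρ * g) • grad2 (fun q => zb q + h q) p) := by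
  rw [matDeriv_eq_pt_add_dot2_grad2]
  simp (disch := fun_prop) only [pt, grad2, px, py, dot2, div_eq_mul_inv, fderiv_fun_add,
    fderiv_const_mul, fderiv_mul_const, add_apply, smul_apply, smul_eq_mul, Prod.fst_add,
    Prod.snd_add, Prod.smul_fst, Prod.smul_snd]
  field_simp
  ring

end Calculus

theorem layer_energy_equality_general
    (ρ g : ℝ) (hρ : 0 < ρ)
    (hα h pS zb Gm Gp : ℝ × ℝ × ℝ → ℝ)
    (um uα up Km Kp : ℝ × ℝ × ℝ → ℝ × ℝ)
    -- regularity assumptions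
    (hα_smooth : ContDiff ℝ 1 hα) (h_smooth : ContDiff ℝ 1 h)
    (pS_smooth : ContDiff ℝ 1 pS) (zb_smooth : ContDiff ℝ 1 zb)
    (uα_smooth : ContDiff ℝ 1 uα)
    -- energy of the layer
    (E : ℝ × ℝ × ℝ → ℝ)
    (E_def : ∀ p, E p =
      hα p * ((eunorm (uα p)) ^ 2 / 2 + pS p / ρ + g * (zb p + h p / 2)))
    -- governing equations
    (mass_eq : ∀ p,
      pt hα p + div2 (fun q => hα q • uα q) p = Gp p - Gm p)
    (mom_eq : ∀ p,
      (ρ * hα p) • ptv uα p + (ρ * hα p) • conv uα uα p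
        + hα p • grad2 pS p + (ρ * g * hα p) • grad2 (fun q => zb q + h q) p
      = Km p - Kp p
        + (ρ / 2 * Gp p) • (up p - uα p)
        + (ρ / 2 * Gm p) • (uα p - um p)) :
    ∀ p,
      ρ * pt E p + ρ * g / 2 * (h p * pt hα p - hα p * pt h p)
        + ρ * div2 (fun q => (E q + g * hα q * h q / 2) • uα q) p
      = dot2 (uα p) (Km p - Kp p) + hα p * pt (fun q => pS q + ρ * g * zb q) p
        + Gp p * (ρ * dot2 (up p) (uα p) / 2 + pS p + ρ * g * (zb p + h p))
        - Gm p * (ρ * dot2 (uα p) (um p) / 2 + pS p + ρ * g * (zb p + h p)) := by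
  intro p
  have dhα := hα_smooth.differentiable one_ne_zero
  have dh := h_smooth.differentiable one_ne_zero
  have dpS := pS_smooth.differentiable one_ne_zero
  have dzb := zb_smooth.differentiable one_ne_zero
  have duα := uα_smooth.differentiable one_ne_zero
  set Ψ : ℝ × ℝ × ℝ → ℝ := fun q => pS q / ρ + g * (zb q + h q)
  set Φ : ℝ × ℝ × ℝ → ℝ := fun q => dot2 (uα q) (uα q) / 2 + Ψ q with hΦ
  have hE : E = fun q => hα q * Φ q - g / 2 * (hα q * h q) := by
    funext q
    rw [E_def, eunorm_sq]
    ring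
  have hflux : (fun q => (E q + g * hα q * h q / 2) • uα q) = fun q => (hα q * Φ q) • uα q := by
    simp only [hE]
    ring_nf
  have hptE : pt E p = pt (fun q => hα q * Φ q) p - g / 2 * (hα p * pt h p + h p * pt hα p) := by
    rw [hE]
    simp (disch := fun_prop) only [pt, fderiv_fun_sub, fderiv_const_mul, fderiv_fun_mul, sub_apply,
      smul_apply, add_apply, smul_eq_mul]
  have htransport := pt_add_div2_mul_smul (dhα p) (by fun_prop : DifferentiableAt ℝ Φ p) (duα p)
  rw [mass_eq p, show Φ p = dot2 (uα p) (uα p) / 2 + Ψ p from rfl] at htransport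
  have hmatΦ : matDeriv uα Φ p = dot2 (uα p) (ptv uα p + conv uα uα p) + matDeriv uα Ψ p := by
    rw [hΦ, matDeriv_add (by fun_prop) (by fun_prop), matDeriv_half_dot2_self (duα p)]
  have hpiezometric := mul_matDeriv_piezometric (u := uα) hρ.ne' g (dpS p) (dzb p) (dh p)
  have hmom := congrArg (dot2 (uα p)) (mom_eq p)
  rw [hptE, hflux]
  simp only [dot2, Prod.fst_add, Prod.snd_add, Prod.fst_sub, Prod.snd_sub, Prod.smul_fst,
    Prod.smul_snd, smul_eq_mul] at hmom htransport hmatΦ hpiezometric ⊢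
  linear_combination ρ * htransport + ρ * hα p * hmatΦ + hα p * hpiezometric + hmom
    + pS p * (Gp p - Gm p) * mul_inv_cancel₀ hρ.ne'

/-- Per-layer energy equality for the multilayer shallow model. -/
theorem layer_energy_equality
    (ρ g : ℝ) (hρ : 0 < ρ)
    (hα h pS zb Gm Gp : ℝ × ℝ × ℝ → ℝ)
    (um uα up Km Kp : ℝ × ℝ × ℝ → ℝ × ℝ)
    -- regularity assumptions
    (hα_smooth : ContDiff ℝ 1 hα) (h_smooth : ContDiff ℝ 1 h)
    (pS_smooth : ContDiff ℝ 1 pS) (zb_smooth : ContDiff ℝ 1 zb)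
    (Gm_smooth : ContDiff ℝ 1 Gm) (Gp_smooth : ContDiff ℝ 1 Gp)
    (um_smooth : ContDiff ℝ 1 um) (uα_smooth : ContDiff ℝ 1 uα)
    (up_smooth : ContDiff ℝ 1 up)
    (Km_smooth : ContDiff ℝ 1 Km) (Kp_smooth : ContDiff ℝ 1 Kp)
    -- energy of the layer
    (E : ℝ × ℝ × ℝ → ℝ)
    (E_def : ∀ p, E p =
      hα p * ((eunorm (uα p)) ^ 2 / 2 + pS p / ρ + g * (zb p + h p / 2)))
    -- governing equations
    (mass_eq : ∀ p,
      pt hα p + div2 (fun q => hα q • uα q) p = Gp p - Gm p)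
    (mom_eq : ∀ p,
      (ρ * hα p) • ptv uα p + (ρ * hα p) • conv uα uα p
        + hα p • grad2 pS p + (ρ * g * hα p) • grad2 (fun q => zb q + h q) p
      = Km p - Kp p
        + (ρ / 2 * Gp p) • (up p - uα p)
        + (ρ / 2 * Gm p) • (uα p - um p)) :
    ∀ p,
      ρ * pt E p + ρ * g / 2 * (h p * pt hα p - hα p * pt h p)
        + ρ * div2 (fun q => (E q + g * hα q * h q / 2) • uα q) p
      = dot2 (uα p) (Km p - Kp p) + hα p * pt (fun q => pS q + ρ * g * zb q) p
        + Gp p * (ρ * dot2 (up p) (uα p) / 2 + pS p + ρ * g * (zb p + h p))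
        - Gm p * (ρ * dot2 (uα p) (um p) / 2 + pS p + ρ * g * (zb p + h p)) :=
  layer_energy_equality_general ρ g hρ hα h pS zb Gm Gp um uα up Km Kp hα_smooth h_smooth pS_smooth
    zb_smooth uα_smooth E E_def mass_eq mom_eq
end

section
/- Dissipativity of the friction/viscous interface terms (step (4) of the energy theorem). Let N ≥ 1, let u_1,…,u_N ∈ ℝ² with u_1 ≠ 0, set u_{N+1} := 0, let η_{α+1/2} ≥ 0 for α = 1,…,N, h_{α+1/2} > 0 for α = 1,…,N−1, h_N > 0, and μ, ρ, g, h ≥ 0. Define K_{1/2} := −μ ρ g h u_1/|u_1|, K_{α+1/2} := −η_{α+1/2}(u_{α+1} − u_α)/h_{α+1/2} for α = 1,…,N−1, and K_{N+1/2} := −η_{N+1/2}(u_{N+1} − u_N)/h_N. Then Σ_{α=1}^N u_α·(K_{α−1/2} − K_{α+1/2}) = −μ ρ g h |u_1| − (η_{N+1/2}/h_N)|u_N|² − Σ_{α=1}^{N−1} (η_{α+1/2}/h_{α+1/2}) |u_{α+1} − u_α|², and in particular this sum is ≤ 0. -/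
/-! The proof is a discrete integration by parts: moving the difference from the stresses `K` onto
the velocities `u` leaves the boundary terms `u₁ · K_{1/2}` and `u_N · K_{N+1/2}` and the interior
terms `(u_{α+1} - u_α) · K_{α+1/2}`. Each of these is minus a square (or `|u₁|`) times a
nonnegative coefficient, because every stress is a nonpositive multiple of the velocity
difference across its interface. -/

open Finset

lemma eunorm_nonneg (a : ℝ × ℝ) : 0 ≤ eunorm a := Real.sqrt_nonneg _

lemma dot2_self (a : ℝ × ℝ) : dot2 a a = eunorm a ^ 2 := by
  rw [eunorm, Real.sq_sqrt (by positivity), dot2, sq, sq]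

lemma dot2_smul_right (c : ℝ) (a b : ℝ × ℝ) : dot2 a (c • b) = c * dot2 a b := by
  simp only [dot2, Prod.smul_fst, Prod.smul_snd, smul_eq_mul]
  ring

lemma dot2_neg_smul_self (c : ℝ) (a : ℝ × ℝ) : dot2 a ((-c) • a) = -(c * eunorm a ^ 2) := by
  rw [dot2_smul_right, dot2_self, neg_mul]

/-- Holds also for `a = 0`, where both sides vanish. -/
lemma dot2_neg_div_eunorm_smul_self (m : ℝ) (a : ℝ × ℝ) :
    dot2 a ((-m / eunorm a) • a) = -(m * eunorm a) := by
  rw [dot2_smul_right, dot2_self, sq, div_mul_eq_mul_div, mul_div_assoc, mul_self_div_self,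
    neg_mul]

lemma sum_Icc_mul_sub_succ {R : Type*} [CommRing R] (a k : ℕ → R) (n : ℕ) :
    ∑ α ∈ Icc 1 (n + 1), a α * (k (α - 1) - k α)
      = a 1 * k 0 - a (n + 1) * k (n + 1) + ∑ α ∈ Icc 1 n, (a (α + 1) - a α) * k α := by
  induction n with
  | zero => simp [mul_sub]
  | succ n ih =>
    rw [sum_Icc_succ_top (by omega), ih, sum_Icc_succ_top (by omega), Nat.add_sub_cancel]
    ring

lemma sum_Icc_dot2_sub_succ (u K : ℕ → ℝ × ℝ) (n : ℕ) :
    ∑ α ∈ Icc 1 (n + 1), dot2 (u α) (K (α - 1) - K α)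
      = dot2 (u 1) (K 0) - dot2 (u (n + 1)) (K (n + 1))
        + ∑ α ∈ Icc 1 n, dot2 (u (α + 1) - u α) (K α) := by
  simp only [dot2, Prod.fst_sub, Prod.snd_sub, sum_add_distrib,
    sum_Icc_mul_sub_succ (fun α => (u α).1) (fun α => (K α).1),
    sum_Icc_mul_sub_succ (fun α => (u α).2) (fun α => (K α).2)]
  ring

theorem interface_terms_dissipative_general
    (N : ℕ) (hN : 1 ≤ N)
    (u : ℕ → ℝ × ℝ) (hu_top : u (N + 1) = 0)
    (η : ℕ → ℝ) (hη : ∀ α ∈ Finset.Icc 1 N, 0 ≤ η α)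
    (hmid : ℕ → ℝ) (hmid_pos : ∀ α ∈ Finset.Icc 1 (N - 1), 0 < hmid α)
    (hNl : ℝ) (hNl_pos : 0 < hNl)
    (μ ρ g h : ℝ) (hμ : 0 ≤ μ) (hρ : 0 ≤ ρ) (hg : 0 ≤ g) (hh : 0 ≤ h)
    (K : ℕ → ℝ × ℝ)
    (K_bot : K 0 = (-(μ * ρ * g * h) / eunorm (u 1)) • u 1)
    (K_mid : ∀ α ∈ Finset.Icc 1 (N - 1),
      K α = (-(η α / hmid α)) • (u (α + 1) - u α))
    (K_top : K N = (-(η N / hNl)) • (u (N + 1) - u N)) :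
    (∑ α ∈ Finset.Icc 1 N, dot2 (u α) (K (α - 1) - K α))
      = -(μ * ρ * g * h * eunorm (u 1)) - η N / hNl * (eunorm (u N)) ^ 2
        - ∑ α ∈ Finset.Icc 1 (N - 1), η α / hmid α * (eunorm (u (α + 1) - u α)) ^ 2
    ∧ (∑ α ∈ Finset.Icc 1 N, dot2 (u α) (K (α - 1) - K α)) ≤ 0 := by
  obtain ⟨n, rfl⟩ : ∃ n, N = n + 1 := ⟨N - 1, by omega⟩
  rw [Nat.add_sub_cancel] at hmid_pos K_mid ⊢
  have viscous : ∑ α ∈ Icc 1 n, dot2 (u (α + 1) - u α) (K α)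
      = -∑ α ∈ Icc 1 n, η α / hmid α * eunorm (u (α + 1) - u α) ^ 2 := by
    rw [← sum_neg_distrib]
    exact sum_congr rfl fun α hα => by rw [K_mid α hα, dot2_neg_smul_self]
  have top : dot2 (u (n + 1)) (K (n + 1)) = η (n + 1) / hNl * eunorm (u (n + 1)) ^ 2 := by
    rw [K_top, hu_top, zero_sub, neg_smul_neg, dot2_smul_right, dot2_self]
  have identity := sum_Icc_dot2_sub_succ u K n
  rw [viscous, top, K_bot, dot2_neg_div_eunorm_smul_self] at identity
  refine ⟨by rw [identity]; ring, identity ▸ ?_⟩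
  have hηN : 0 ≤ η (n + 1) := hη _ (by simp)
  have interior : 0 ≤ ∑ α ∈ Icc 1 n, η α / hmid α * eunorm (u (α + 1) - u α) ^ 2 :=
    sum_nonneg fun α hα => by
      have := hη α (by simp only [mem_Icc] at hα ⊢; omega)
      have := hmid_pos α hα
      positivity
  have friction : 0 ≤ μ * ρ * g * h * eunorm (u 1) :=
    mul_nonneg (by positivity) (eunorm_nonneg _)
  have top_nonneg : 0 ≤ η (n + 1) / hNl * eunorm (u (n + 1)) ^ 2 := by positivity
  linarith

/-- Dissipativity of the friction/viscous interface terms of the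
multilayer shallow model. -/
theorem interface_terms_dissipative
    (N : ℕ) (hN : 1 ≤ N)
    (u : ℕ → ℝ × ℝ) (hu1 : u 1 ≠ 0) (hu_top : u (N + 1) = 0)
    (η : ℕ → ℝ) (hη : ∀ α ∈ Finset.Icc 1 N, 0 ≤ η α)
    (hmid : ℕ → ℝ) (hmid_pos : ∀ α ∈ Finset.Icc 1 (N - 1), 0 < hmid α)
    (hNl : ℝ) (hNl_pos : 0 < hNl)
    (μ ρ g h : ℝ) (hμ : 0 ≤ μ) (hρ : 0 ≤ ρ) (hg : 0 ≤ g) (hh : 0 ≤ h)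
    (K : ℕ → ℝ × ℝ)
    (K_bot : K 0 = (-(μ * ρ * g * h) / eunorm (u 1)) • u 1)
    (K_mid : ∀ α ∈ Finset.Icc 1 (N - 1),
      K α = (-(η α / hmid α)) • (u (α + 1) - u α))
    (K_top : K N = (-(η N / hNl)) • (u (N + 1) - u N)) :
    (∑ α ∈ Finset.Icc 1 N, dot2 (u α) (K (α - 1) - K α))
      = -(μ * ρ * g * h * eunorm (u 1)) - η N / hNl * (eunorm (u N)) ^ 2
        - ∑ α ∈ Finset.Icc 1 (N - 1), η α / hmid α * (eunorm (u (α + 1) - u α)) ^ 2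
    ∧ (∑ α ∈ Finset.Icc 1 N, dot2 (u α) (K (α - 1) - K α)) ≤ 0 :=
  interface_terms_dissipative_general N hN u hu_top η hη hmid hmid_pos hNl hNl_pos μ ρ g h hμ hρ hg
    hh K K_bot K_mid K_top
end
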